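/- arXiv:2604.03525 — 4 statements merged into one kernel-verified Lean document; each statement's English description precedes it below -/
import Mathlib

section
/- For all real r > 0 and positive integers n, the optimal worst-case cumulative p-loss for online learning of the truncated linear class G_L(n, ℝ, r) equals n·r^p: a learner predicting via linear extension of known values (and 0 on new directions or out-of-range values) incurs at most n errors of magnitude at most r, while an adversary querying the zero vector followed by the n standard basis vectors and answering ±r (whichever is farther from the guess) forces loss at least n·r^p. -/
open MeasureTheory
open scoped ENNReal

noncomputable section

/-- The truncated linear class `G_L(n, ℝ, r)`: functions `g_v(x) = v·x` if
`|v·x| ≤ r` and `g_v(x) = 0` otherwise. -/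
def GLfam (n : ℕ) (r : ℝ) : Set ((Fin n → ℝ) → ℝ) :=
  {g | ∃ v : Fin n → ℝ, g = fun x =>
    if |∑ i, v i * x i| ≤ r then ∑ i, v i * x i else 0}

/-- The prediction of algorithm `A` in round `t`. -/
def predict (n : ℕ) (A : List ((Fin n → ℝ) × ℝ) → (Fin n → ℝ) → ℝ)
    (f : (Fin n → ℝ) → ℝ) (x : ℕ → Fin n → ℝ) (t : ℕ) : ℝ :=
  A ((List.range t).map fun j => (x j, f (x j))) (x t)

/-- The cumulative `p`-loss over `m` rounds; round `0` is not counted. -/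
def pLoss (n : ℕ) (p : ℝ) (A : List ((Fin n → ℝ) × ℝ) → (Fin n → ℝ) → ℝ)
    (f : (Fin n → ℝ) → ℝ) (x : ℕ → Fin n → ℝ) (m : ℕ) : ℝ≥0∞ :=
  ∑ t ∈ Finset.Icc 1 m, ENNReal.ofReal (|predict n A f x t - f (x t)| ^ p)

/-- `opt_{p}` for a family of functions on `ℝ^n`. -/
def opt (n : ℕ) (p : ℝ) (F : Set ((Fin n → ℝ) → ℝ)) : ℝ≥0∞ :=
  ⨅ A : List ((Fin n → ℝ) × ℝ) → (Fin n → ℝ) → ℝ, ⨆ f ∈ F,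
    ⨆ x : ℕ → Fin n → ℝ, ⨆ m : ℕ, pLoss n p A f x m

namespace Stmt7

def dot (n : ℕ) (w x : Fin n → ℝ) : ℝ := ∑ i, w i * x i
def trunc (r y : ℝ) : ℝ := if |y| ≤ r then y else 0
def consistent (n : ℕ) (hist : List ((Fin n → ℝ) × ℝ)) (w : Fin n → ℝ) : Prop :=
  ∀ q ∈ hist, q.2 ≠ 0 → dot n w q.1 = q.2
def pts (n : ℕ) (hist : List ((Fin n → ℝ) × ℝ)) : Set (Fin n → ℝ) :=
  {z | ∃ q ∈ hist, q.2 ≠ 0 ∧ q.1 = z}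
open Classical in
noncomputable def alg (n : ℕ) (r : ℝ) (hist : List ((Fin n → ℝ) × ℝ))
    (x : Fin n → ℝ) : ℝ :=
  if h : (∃ w, consistent n hist w) ∧ x ∈ Submodule.span ℝ (pts n hist)
  then trunc r (dot n h.1.choose x) else 0
def dotMap (n : ℕ) (w : Fin n → ℝ) : (Fin n → ℝ) →ₗ[ℝ] ℝ where
  toFun := dot n w
  map_add' a b := by simp [dot, mul_add, Finset.sum_add_distrib]
  map_smul' c a := by simp [dot, Finset.mul_sum, mul_left_comm]
lemma dot_eq_of_consistent {n : ℕ} {hist : List ((Fin n → ℝ) × ℝ)}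
    {w₁ w₂ : Fin n → ℝ} (h₁ : consistent n hist w₁) (h₂ : consistent n hist w₂)
    {x : Fin n → ℝ} (hx : x ∈ Submodule.span ℝ (pts n hist)) :
    dot n w₁ x = dot n w₂ x := by
  have hker : Submodule.span ℝ (pts n hist) ≤ LinearMap.ker (dotMap n w₁ - dotMap n w₂) := by
    rw [Submodule.span_le]
    rintro z ⟨q, hq, hq2, rfl⟩
    simp [LinearMap.mem_ker, dotMap, h₁ q hq hq2, h₂ q hq hq2]
    exact (show dot n w₁ q.1 - dot n w₂ q.1 = 0 by simp [h₁ q hq hq2, h₂ q hq hq2])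
  have := hker hx
  simp only [LinearMap.mem_ker, LinearMap.sub_apply] at this
  have h := sub_eq_zero.mp this
  exact h

/-- The truncated linear function. -/
def truncf (n : ℕ) (r : ℝ) (v : Fin n → ℝ) : (Fin n → ℝ) → ℝ :=
  fun x => if |∑ i, v i * x i| ≤ r then ∑ i, v i * x i else 0

lemma truncf_eq_trunc (n : ℕ) (r : ℝ) (v x : Fin n → ℝ) :
    truncf n r v x = trunc r (dot n v x) := rfl

lemma abs_truncf_le (n : ℕ) {r : ℝ} (hr : 0 ≤ r) (v x : Fin n → ℝ) :
    |truncf n r v x| ≤ r := by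
  unfold truncf
  split
  · assumption
  · simpa using hr

/-- History of the run. -/
def histOf (n : ℕ) (f : (Fin n → ℝ) → ℝ) (x : ℕ → Fin n → ℝ) (t : ℕ) :
    List ((Fin n → ℝ) × ℝ) :=
  (List.range t).map fun j => (x j, f (x j))

lemma v_consistent (n : ℕ) (r : ℝ) (v : Fin n → ℝ) (x : ℕ → Fin n → ℝ) (t : ℕ) :
    consistent n (histOf n (truncf n r v) x t) v := by
  rintro q hq hq2
  simp only [histOf, List.mem_map, List.mem_range] at hq
  obtain ⟨j, -, rfl⟩ := hq
  simp only [truncf] at hq2 ⊢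
  by_cases h : |∑ i, v i * x j i| ≤ r
  · simp [dot, h]
  · simp [h] at hq2

/-- If the query is in the span of known points, the algorithm predicts correctly. -/
lemma alg_correct (n : ℕ) (r : ℝ) (v : Fin n → ℝ) (x : ℕ → Fin n → ℝ) (t : ℕ)
    (hx : x t ∈ Submodule.span ℝ (pts n (histOf n (truncf n r v) x t))) :
    alg n r (histOf n (truncf n r v) x t) (x t) = truncf n r v (x t) := by
  unfold alg
  rw [dif_pos ⟨⟨v, v_consistent n r v x t⟩, hx⟩]
  have hch := (Exists.intro v (v_consistent n r v x t) : ∃ w, consistent n (histOf n (truncf n r v) x t) w).choose_spec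
  rw [dot_eq_of_consistent hch (v_consistent n r v x t) hx, truncf_eq_trunc]

lemma alg_miss (n : ℕ) (r : ℝ) (f : (Fin n → ℝ) → ℝ) (x : ℕ → Fin n → ℝ) (t : ℕ)
    (hx : x t ∉ Submodule.span ℝ (pts n (histOf n f x t))) :
    alg n r (histOf n f x t) (x t) = 0 := by
  unfold alg
  rw [dif_neg]
  rintro ⟨-, h⟩
  exact hx h

lemma pts_mono (n : ℕ) (f : (Fin n → ℝ) → ℝ) (x : ℕ → Fin n → ℝ) {s t : ℕ}
    (h : s ≤ t) : pts n (histOf n f x s) ⊆ pts n (histOf n f x t) := by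
  rintro z ⟨q, hq, hq2, rfl⟩
  refine ⟨q, ?_, hq2, rfl⟩
  simp only [histOf, List.mem_map, List.mem_range] at hq ⊢
  obtain ⟨j, hj, rfl⟩ := hq
  exact ⟨j, lt_of_lt_of_le hj h, rfl⟩


open Classical

variable (n : ℕ) (r : ℝ) (v : Fin n → ℝ) (x : ℕ → Fin n → ℝ)

def W (f : (Fin n → ℝ) → ℝ) (t : ℕ) : Submodule ℝ (Fin n → ℝ) :=
  Submodule.span ℝ (pts n (histOf n f x t))

def dW (f : (Fin n → ℝ) → ℝ) (t : ℕ) : ℕ := Module.finrank ℝ (W n x f t)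

lemma W_mono (f : (Fin n → ℝ) → ℝ) {s t : ℕ} (h : s ≤ t) :
    W n x f s ≤ W n x f t :=
  Submodule.span_mono (pts_mono n f x h)

lemma dW_mono (f : (Fin n → ℝ) → ℝ) {s t : ℕ} (h : s ≤ t) :
    dW n x f s ≤ dW n x f t :=
  Submodule.finrank_mono (W_mono n x f h)

lemma dW_strict (f : (Fin n → ℝ) → ℝ) {t : ℕ}
    (h1 : x t ∉ W n x f t) (h2 : f (x t) ≠ 0) :
    dW n x f t < dW n x f (t + 1) := by
  apply Submodule.finrank_lt_finrank_of_lt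
  refine lt_of_le_of_ne (W_mono n x f (Nat.le_succ t)) ?_
  intro hEq
  apply h1
  rw [hEq]
  apply Submodule.subset_span
  refine ⟨(x t, f (x t)), ?_, h2, rfl⟩
  simp only [histOf, List.mem_map, List.mem_range]
  exact ⟨t, Nat.lt_succ_self t, rfl⟩

lemma dW_lt_n (f : (Fin n → ℝ) → ℝ) {t : ℕ}
    (h1 : x t ∉ W n x f t) (h2 : f (x t) ≠ 0) :
    dW n x f t < n := by
  have h := dW_strict n x f h1 h2
  have h2' : dW n x f (t+1) ≤ n := by
    have := Submodule.finrank_le (W n x f (t+1))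
    simpa [dW, Module.finrank_fin_fun] using this
  omega

lemma card_bad_le (f : (Fin n → ℝ) → ℝ) (m : ℕ) :
    ((Finset.Icc 1 m).filter fun t => x t ∉ W n x f t ∧ f (x t) ≠ 0).card ≤ n := by
  refine le_trans (Finset.card_le_card_of_injOn (t := Finset.range n) (dW n x f) ?_ ?_) (by simp)
  · intro t ht
    simp only [Finset.coe_filter, Set.mem_setOf_eq] at ht
    exact Finset.mem_range.mpr (dW_lt_n n x f ht.2.1 ht.2.2)
  · intro s hs t ht hEq
    simp only [Finset.coe_filter, Set.mem_setOf_eq] at hs ht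
    by_contra hne
    rcases Nat.lt_or_ge s t with h | h
    · have h1 := dW_strict n x f hs.2.1 hs.2.2
      have h2 := dW_mono n x f (Nat.succ_le_of_lt h) (s := s+1) (t := t)
      omega
    · have h' : t < s := lt_of_le_of_ne h (Ne.symm hne)
      have h1 := dW_strict n x f ht.2.1 ht.2.2
      have h2 := dW_mono n x f (Nat.succ_le_of_lt h') (s := t+1) (t := s)
      omega



lemma pLoss_alg_le (n : ℕ) (p r : ℝ) (hr : 0 < r) (hp : 1 ≤ p) (v : Fin n → ℝ)
    (x : ℕ → Fin n → ℝ) (m : ℕ) :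
    pLoss n p (alg n r) (truncf n r v) x m ≤ ENNReal.ofReal (↑n * r ^ p) := by
  classical
  set f := truncf n r v with hf
  have hp0 : p ≠ 0 := (lt_of_lt_of_le one_pos hp).ne'
  have hterm : ∀ t ∈ Finset.Icc 1 m,
      ENNReal.ofReal (|predict n (alg n r) f x t - f (x t)| ^ p)
      ≤ if x t ∉ W n x f t ∧ f (x t) ≠ 0 then ENNReal.ofReal (r ^ p) else 0 := by
    intro t _
    have hpred : predict n (alg n r) f x t = alg n r (histOf n f x t) (x t) := rfl
    by_cases hmem : x t ∈ W n x f t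
    · have hc : alg n r (histOf n f x t) (x t) = f (x t) := alg_correct n r v x t hmem
      rw [hpred, hc]
      simp [hmem, sub_self, Real.zero_rpow hp0]
    · have hz : alg n r (histOf n f x t) (x t) = 0 := alg_miss n r f x t hmem
      rw [hpred, hz]
      by_cases hfz : f (x t) = 0
      · simp [hfz, Real.zero_rpow hp0]
      · rw [if_pos ⟨hmem, hfz⟩]
        apply ENNReal.ofReal_le_ofReal
        have h1 : |0 - f (x t)| ≤ r := by
          rw [zero_sub, abs_neg]; exact abs_truncf_le n hr.le v (x t)
        exact Real.rpow_le_rpow (abs_nonneg _) h1 (by linarith)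
  calc pLoss n p (alg n r) f x m
      ≤ ∑ t ∈ Finset.Icc 1 m,
          (if x t ∉ W n x f t ∧ f (x t) ≠ 0 then ENNReal.ofReal (r ^ p) else 0) :=
        Finset.sum_le_sum hterm
    _ = ((Finset.Icc 1 m).filter fun t => x t ∉ W n x f t ∧ f (x t) ≠ 0).card
          • ENNReal.ofReal (r ^ p) := by
        rw [← Finset.sum_filter, Finset.sum_const]
    _ ≤ n • ENNReal.ofReal (r ^ p) := by
        exact nsmul_le_nsmul_left (by positivity) (card_bad_le n x f m)
    _ = ENNReal.ofReal (↑n * r ^ p) := by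
        rw [nsmul_eq_mul, ENNReal.ofReal_mul (by positivity), ENNReal.ofReal_natCast]

/-! ### Lower bound: adversary construction -/

def xs (n : ℕ) (t : ℕ) : Fin n → ℝ := fun i => if (i : ℕ) + 1 = t then 1 else 0

open Classical in
noncomputable def histL (n : ℕ) (A : List ((Fin n → ℝ) × ℝ) → (Fin n → ℝ) → ℝ)
    (r : ℝ) : ℕ → List ((Fin n → ℝ) × ℝ)
  | 0 => []
  | t+1 => histL n A r t ++
      [(xs n t, if t = 0 then 0 else if 0 ≤ A (histL n A r t) (xs n t) then -r else r)]

open Classical in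
noncomputable def vL (n : ℕ) (A : List ((Fin n → ℝ) × ℝ) → (Fin n → ℝ) → ℝ)
    (r : ℝ) : Fin n → ℝ :=
  fun i => if 0 ≤ A (histL n A r ((i : ℕ) + 1)) (xs n ((i : ℕ) + 1)) then -r else r

lemma abs_vL (n : ℕ) (A : List ((Fin n → ℝ) × ℝ) → (Fin n → ℝ) → ℝ)
    {r : ℝ} (hr : 0 < r) (i : Fin n) : |vL n A r i| = r := by
  unfold vL
  split <;> simp [abs_of_pos hr, abs_of_neg (neg_neg_iff_pos.mpr hr)]

lemma dot_xs (n : ℕ) (v : Fin n → ℝ) {t : ℕ} (ht1 : 1 ≤ t) (htn : t ≤ n) :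
    dot n v (xs n t) = v ⟨t - 1, by omega⟩ := by
  unfold dot xs
  rw [Finset.sum_eq_single (⟨t - 1, by omega⟩ : Fin n)]
  · simp [Nat.sub_add_cancel ht1]
  · intro i _ hi
    have : ¬ ((i : ℕ) + 1 = t) := by
      intro h
      apply hi
      apply Fin.ext
      simp [← h]
    simp [this]
  · simp

lemma truncf_xs (n : ℕ) (A : List ((Fin n → ℝ) × ℝ) → (Fin n → ℝ) → ℝ)
    {r : ℝ} (hr : 0 < r) {t : ℕ} (ht1 : 1 ≤ t) (htn : t ≤ n) :
    truncf n r (vL n A r) (xs n t) = vL n A r ⟨t - 1, by omega⟩ := by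
  rw [truncf_eq_trunc, dot_xs n _ ht1 htn, trunc, if_pos]
  rw [abs_vL n A hr]

lemma truncf_xs_zero (n : ℕ) {r : ℝ} (hr : 0 < r) (v : Fin n → ℝ) :
    truncf n r v (xs n 0) = 0 := by
  have h0 : dot n v (xs n 0) = 0 := by
    unfold dot xs
    simp
  rw [truncf_eq_trunc, h0, trunc, if_pos (by simp [hr.le])]

lemma histL_eq (n : ℕ) (A : List ((Fin n → ℝ) × ℝ) → (Fin n → ℝ) → ℝ)
    {r : ℝ} (hr : 0 < r) :
    ∀ t, t ≤ n → histL n A r t =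
      (List.range t).map fun j => (xs n j, truncf n r (vL n A r) (xs n j)) := by
  intro t
  induction t with
  | zero => intro _; simp [histL]
  | succ t ih =>
    intro ht
    rw [List.range_succ, List.map_append, ← ih (by omega)]
    show histL n A r (t+1) = _
    rw [histL]
    congr 1
    simp only [List.map_cons, List.map_nil]
    congr 2
    by_cases h0 : t = 0
    · subst h0
      rw [if_pos rfl, truncf_xs_zero n hr]
    · rw [if_neg h0, truncf_xs n A hr (by omega) (by omega)]
      unfold vL
      have : (t - 1) + 1 = t := by omega
      simp only [this]

lemma pLoss_lower (n : ℕ) (A : List ((Fin n → ℝ) × ℝ) → (Fin n → ℝ) → ℝ)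
    {r p : ℝ} (hr : 0 < r) (hp : 1 ≤ p) :
    ENNReal.ofReal (↑n * r ^ p) ≤ pLoss n p A (truncf n r (vL n A r)) (xs n) n := by
  have key : ∀ t ∈ Finset.Icc 1 n,
      ENNReal.ofReal (r ^ p)
      ≤ ENNReal.ofReal (|predict n A (truncf n r (vL n A r)) (xs n) t
          - truncf n r (vL n A r) (xs n t)| ^ p) := by
    intro t ht
    rw [Finset.mem_Icc] at ht
    have hpred : predict n A (truncf n r (vL n A r)) (xs n) t = A (histL n A r t) (xs n t) := by
      rw [predict, ← histL_eq n A hr t ht.2]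
    have hfv : truncf n r (vL n A r) (xs n t) = vL n A r ⟨t - 1, by omega⟩ :=
      truncf_xs n A hr ht.1 ht.2
    have hvt : vL n A r ⟨t - 1, by omega⟩ =
        if 0 ≤ A (histL n A r t) (xs n t) then -r else r := by
      unfold vL
      have h1 : (t - 1) + 1 = t := by omega
      simp only [h1]
    have habs : r ≤ |predict n A (truncf n r (vL n A r)) (xs n) t
        - truncf n r (vL n A r) (xs n t)| := by
      rw [hpred, hfv, hvt]
      set a := A (histL n A r t) (xs n t)
      by_cases ha : 0 ≤ a
      · rw [if_pos ha, sub_neg_eq_add, abs_of_nonneg (by linarith)]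
        linarith
      · rw [if_neg ha, abs_of_neg (by linarith)]
        linarith
    exact ENNReal.ofReal_le_ofReal
      (Real.rpow_le_rpow hr.le habs (by linarith))
  calc ENNReal.ofReal (↑n * r ^ p)
      = ∑ _t ∈ Finset.Icc 1 n, ENNReal.ofReal (r ^ p) := by
        rw [Finset.sum_const, Nat.card_Icc, nsmul_eq_mul,
          ENNReal.ofReal_mul (by positivity), ENNReal.ofReal_natCast]
        norm_num
    _ ≤ _ := Finset.sum_le_sum key

end Stmt7

/-- For all `r > 0` and positive integers `n`, the optimal worst-case cumulative
`p`-loss for online learning of the truncated linear class `G_L(n, ℝ, r)` equals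
`n · r^p`. -/
theorem stmt7 (n : ℕ) (hn : 0 < n) (r p : ℝ) (hr : 0 < r) (hp : 1 ≤ p) :
    opt n p (GLfam n r) = ENNReal.ofReal (n * r ^ p) := by
  apply le_antisymm
  · refine iInf_le_of_le (Stmt7.alg n r) ?_
    refine iSup₂_le fun f hf => ?_
    obtain ⟨v, rfl⟩ := hf
    refine iSup_le fun x => iSup_le fun m => ?_
    exact Stmt7.pLoss_alg_le n p r hr hp v x m
  · refine le_iInf fun A => ?_
    refine le_iSup₂_of_le (Stmt7.truncf n r (Stmt7.vL n A r)) ⟨Stmt7.vL n A r, rfl⟩ ?_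
    refine le_iSup_of_le (Stmt7.xs n) ?_
    refine le_iSup_of_le n ?_
    exact Stmt7.pLoss_lower n A hr hp
end
end

section
/- Let q ≥ 2 and k, c ≥ 0 with c ≤ 1. Then for all a, b ∈ (0, 1], the inequality (c+ka)^q/a^{q−1} + |c−kb|^q/b^{q−1} − (a+b)k^q ≥ c^q holds. -/
open Real

lemma super_add (x y p : ℝ) (hx : 0 ≤ x) (hy : 0 ≤ y) (hp : 1 ≤ p) :
    x ^ p + y ^ p ≤ (x + y) ^ p := by
  lift x to NNReal using hx
  lift y to NNReal using hy
  exact_mod_cast NNReal.add_rpow_le_rpow_add x y hp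

/-- L1: `(k+x)^q ≥ k^q + q k^{q-1} x + x^q`. -/
lemma L1 (q k x : ℝ) (hq : 2 ≤ q) (hk : 0 ≤ k) (hx : 0 ≤ x) :
    k ^ q + q * k ^ (q - 1) * x + x ^ q ≤ (k + x) ^ q := by
  have hq1 : (1:ℝ) ≤ q := by linarith
  set g : ℝ → ℝ := fun t => (k + t) ^ q - q * k ^ (q - 1) * t - t ^ q with hg
  have hderiv : ∀ t : ℝ, HasDerivAt g
      (q * (k + t) ^ (q - 1) - q * k ^ (q - 1) - q * t ^ (q - 1)) t := by
    intro t
    have h1 : HasDerivAt (fun t : ℝ => (k + t) ^ q) (q * (k + t) ^ (q - 1)) t := by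
      have := (Real.hasDerivAt_rpow_const (x := k + t) (p := q) (Or.inr hq1)).comp t
        ((hasDerivAt_id t).const_add k)
      simpa [Function.comp_def] using this
    have h2 : HasDerivAt (fun t : ℝ => q * k ^ (q - 1) * t) (q * k ^ (q - 1)) t := by
      simpa using (hasDerivAt_id t).const_mul (q * k ^ (q - 1))
    have h3 : HasDerivAt (fun t : ℝ => t ^ q) (q * t ^ (q - 1)) t :=
      Real.hasDerivAt_rpow_const (Or.inr hq1)
    exact (h1.sub h2).sub h3
  have hmono : MonotoneOn g (Set.Ici (0:ℝ)) := by
    apply monotoneOn_of_deriv_nonneg (convex_Ici 0)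
    · exact fun t _ => ((hderiv t).continuousAt).continuousWithinAt
    · intro t ht
      exact ((hderiv t).differentiableAt).differentiableWithinAt
    · intro t ht
      rw [interior_Ici] at ht
      rw [(hderiv t).deriv]
      have h := super_add k t (q - 1) hk ht.le (by linarith)
      nlinarith [h]
  have h0 : g 0 ≤ g x := hmono (by simp) hx (by exact hx)
  have hz : g 0 = k ^ q := by
    simp [hg, Real.zero_rpow (by positivity : q ≠ 0)]
  rw [hz] at h0
  simp only [hg] at h0
  linarith

/-- L2: tangent line inequality `|y|^q ≥ k^q + q k^{q-1} (y - k)`. -/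
lemma L2 (q k y : ℝ) (hq : 2 ≤ q) (hk : 0 ≤ k) :
    k ^ q + q * k ^ (q - 1) * (y - k) ≤ |y| ^ q := by
  have hq1 : (1:ℝ) ≤ q := by linarith
  rcases eq_or_lt_of_le hk with rfl | hkpos
  · rw [Real.zero_rpow (ne_of_gt (by linarith : (0:ℝ) < q)),
      Real.zero_rpow (sub_ne_zero.mpr (by linarith : q ≠ 1))]
    simpa using Real.rpow_nonneg (abs_nonneg y) q
  rcases le_or_gt y 0 with hy | hy
  · have h1 : |y| ^ q ≥ 0 := Real.rpow_nonneg (abs_nonneg y) q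
    have hkq : k ^ q = k ^ (q - 1) * k := by
      rw [← Real.rpow_add_one (ne_of_gt hkpos)]; ring_nf
    have hkq1 : (0:ℝ) ≤ k ^ (q - 1) := Real.rpow_nonneg hk _
    have h2 : k ^ (q - 1) * y ≤ 0 := mul_nonpos_of_nonneg_of_nonpos hkq1 hy
    nlinarith [Real.rpow_nonneg hk q, mul_nonpos_of_nonneg_of_nonpos
      (by linarith : (0:ℝ) ≤ q) h2, mul_nonneg (by linarith : (0:ℝ) ≤ q - 1)
      (Real.rpow_nonneg hk q)]
  · have hs : (-1:ℝ) ≤ y / k - 1 := by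
      have : 0 ≤ y / k := div_nonneg hy.le hkpos.le
      linarith
    have hb := one_add_mul_self_le_rpow_one_add hs hq1
    have hyk : 1 + (y / k - 1) = y / k := by ring
    rw [hyk] at hb
    have hmul := mul_le_mul_of_nonneg_left hb (Real.rpow_nonneg hkpos.le q)
    have h1 : k ^ q * (y / k) ^ q = y ^ q := by
      rw [← Real.mul_rpow hkpos.le (div_nonneg hy.le hkpos.le)]
      rw [mul_div_cancel₀ _ (ne_of_gt hkpos)]
    have h2 : k ^ q * (1 + q * (y / k - 1)) = k ^ q + q * k ^ (q - 1) * (y - k) := by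
      have hkq : k ^ q = k ^ (q - 1) * k := by
        rw [← Real.rpow_add_one (ne_of_gt hkpos)]; ring_nf
      field_simp [hkq]
      rw [hkq]
      ring
    rw [h1, h2] at hmul
    rwa [abs_of_pos hy]

/-- For `q ≥ 2`, `k ≥ 0`, `0 ≤ c ≤ 1`, and `a, b ∈ (0, 1]`:
`(c+ka)^q/a^{q-1} + |c-kb|^q/b^{q-1} - (a+b)k^q ≥ c^q`. -/
theorem stmt9 (q k c a b : ℝ) (hq : 2 ≤ q) (hk : 0 ≤ k) (hc0 : 0 ≤ c) (hc1 : c ≤ 1)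
    (ha : a ∈ Set.Ioc (0:ℝ) 1) (hb : b ∈ Set.Ioc (0:ℝ) 1) :
    (c + k * a) ^ q / a ^ (q - 1) + |c - k * b| ^ q / b ^ (q - 1)
      - (a + b) * k ^ q ≥ c ^ q := by
  obtain ⟨ha0, ha1⟩ := ha
  obtain ⟨hb0, hb1⟩ := hb
  have hq1 : (1:ℝ) ≤ q := by linarith
  -- rewrite first term as a * (k + c/a)^q
  have haq : a ^ q = a ^ (q - 1) * a := by
    rw [← Real.rpow_add_one (ne_of_gt ha0)]; ring_nf
  have hbq : b ^ q = b ^ (q - 1) * b := by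
    rw [← Real.rpow_add_one (ne_of_gt hb0)]; ring_nf
  have haq1 : (0:ℝ) < a ^ (q - 1) := Real.rpow_pos_of_pos ha0 _
  have hbq1 : (0:ℝ) < b ^ (q - 1) := Real.rpow_pos_of_pos hb0 _
  have e1 : (c + k * a) ^ q / a ^ (q - 1) = a * (k + c / a) ^ q := by
    have : c + k * a = a * (k + c / a) := by field_simp; ring
    rw [this, Real.mul_rpow ha0.le (by positivity), haq]
    field_simp
  have e2 : |c - k * b| ^ q / b ^ (q - 1) = b * |k - c / b| ^ q := by
    have : |c - k * b| = b * |k - c / b| := by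
      have h : c - k * b = b * (c / b - k) := by field_simp
      rw [h, abs_mul, abs_of_pos hb0, abs_sub_comm]
    rw [this, Real.mul_rpow hb0.le (abs_nonneg _), hbq]
    field_simp
  rw [e1, e2]
  -- lower bounds
  have hca : 0 ≤ c / a := div_nonneg hc0 ha0.le
  have h1 := L1 q k (c / a) hq hk hca
  have h2 := L2 q k (k - c / b) hq hk
  have hb1' := mul_le_mul_of_nonneg_left h1 ha0.le
  have hb2' := mul_le_mul_of_nonneg_left h2 hb0.le
  -- a * (c/a)^q = c^q / a^{q-1} ≥ c^q
  have e3 : a * (c / a) ^ q = c ^ q / a ^ (q - 1) := by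
    rw [Real.div_rpow hc0 ha0.le, haq]
    field_simp
  have h4 : c ^ q ≤ c ^ q / a ^ (q - 1) := by
    rw [le_div_iff₀ haq1]
    have hle : a ^ (q - 1) ≤ 1 :=
      Real.rpow_le_one ha0.le ha1 (by linarith)
    nlinarith [Real.rpow_nonneg hc0 q]
  have e5 : b * (k ^ q + q * k ^ (q - 1) * (k - c / b - k)) = b * k ^ q - q * k ^ (q - 1) * c := by
    field_simp
    ring
  rw [mul_add, mul_add, e3] at hb1'
  rw [e5] at hb2'
  have e6 : a * (q * k ^ (q - 1) * (c / a)) = q * k ^ (q - 1) * c := by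
    field_simp
  rw [e6] at hb1'
  linarith
end

section
/- For q ≥ 2 and real numbers k ≥ c ≥ 0, we have (c+k)^q + (k−c)^q ≥ 2k^q + c^q. -/
/-!
Set `g c = (c + k)^q + (k - c)^q - c^q`. Then `g 0 = 2 k^q`, and
`g' c = q ((c + k)^(q-1) - (k - c)^(q-1) - c^(q-1)) ≥ 0` on `[0, k]`
by superadditivity of `x ↦ x^(q-1)`, which holds because `q - 1 ≥ 1`.
-/

open Real Set

lemma rpow_sub_add_rpow_le_rpow_add {p k c : ℝ} (hp : 1 ≤ p) (hc : 0 ≤ c) (hck : c ≤ k) :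
    (k - c) ^ p + c ^ p ≤ (c + k) ^ p :=
  calc (k - c) ^ p + c ^ p ≤ (k - c + c) ^ p := add_rpow_le_rpow_add (by linarith) hc hp
    _ ≤ (c + k) ^ p := rpow_le_rpow (by linarith) (by linarith) (by linarith)

lemma hasDerivAt_rpow_add_add_rpow_sub_sub_rpow {q : ℝ} (hq : 1 ≤ q) (k c : ℝ) :
    HasDerivAt (fun x : ℝ => (x + k) ^ q + (k - x) ^ q - x ^ q)
      (q * ((c + k) ^ (q - 1) - (k - c) ^ (q - 1) - c ^ (q - 1))) c := by
  have hplus := ((hasDerivAt_id' c).add_const k).rpow_const (p := q) (Or.inr hq)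
  have hminus := ((hasDerivAt_id' c).const_sub k).rpow_const (p := q) (Or.inr hq)
  have hid := (hasDerivAt_id' c).rpow_const (p := q) (Or.inr hq)
  exact ((hplus.add hminus).sub hid).congr_deriv (by ring)

lemma monotoneOn_rpow_add_add_rpow_sub_sub_rpow {q k : ℝ} (hq : 2 ≤ q) :
    MonotoneOn (fun x : ℝ => (x + k) ^ q + (k - x) ^ q - x ^ q) (Icc 0 k) := by
  have hderiv := hasDerivAt_rpow_add_add_rpow_sub_sub_rpow (q := q) (by linarith) k
  refine monotoneOn_of_hasDerivWithinAt_nonneg (convex_Icc 0 k)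
    (fun x _ => (hderiv x).continuousAt.continuousWithinAt)
    (fun x _ => (hderiv x).hasDerivWithinAt) fun x hx => ?_
  rw [interior_Icc] at hx
  have hsuperadd := rpow_sub_add_rpow_le_rpow_add (p := q - 1) (by linarith) hx.1.le hx.2.le
  exact mul_nonneg (by linarith) (by linarith)

/-- For `q ≥ 2` and `k ≥ c ≥ 0`: `(c+k)^q + (k-c)^q ≥ 2k^q + c^q`. -/
theorem stmt10 (q k c : ℝ) (hq : 2 ≤ q) (hc : 0 ≤ c) (hck : c ≤ k) :
    (c + k) ^ q + (k - c) ^ q ≥ 2 * k ^ q + c ^ q := by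
  have hk : 0 ≤ k := hc.trans hck
  have hmono := monotoneOn_rpow_add_add_rpow_sub_sub_rpow hq
    (left_mem_Icc.mpr hk) ⟨hc, hck⟩ hc
  simp only [zero_add, sub_zero, zero_rpow (by linarith : q ≠ 0)] at hmono
  linarith
end

section
/- Let S = {(u_i, v_i) : 1 ≤ i ≤ m} ⊆ ℝ² with u_1 < ⋯ < u_m, and let (x, y) ∈ ℝ² with x ∉ {u_1,…,u_m}. Then J[f_{S ∪ {(x,y)}}] ≥ J[f_S] + (y − f_S(x))²/min_i |x − u_i|, where J[g] = ∫_ℝ g'(t)² dt and f_T denotes the piecewise linear interpolant of the finite set T. -/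
open MeasureTheory
open scoped ENNReal

noncomputable section

/-- The piecewise linear interpolant of the points `(u_i, v_i)` for
`u_0 < u_1 < ⋯ < u_m`, constant outside `[u_0, u_m]`.  (For strictly monotone `u`
this closed formula agrees with the usual piecewise description.) -/
def fS (m : ℕ) (u v : Fin (m + 1) → ℝ) : ℝ → ℝ := fun x =>
  v 0 + ∑ i : Fin m,
    (v i.succ - v i.castSucc) / (u i.succ - u i.castSucc) *
      (min x (u i.succ) - min x (u i.castSucc))

/-- The quadratic action `J[g] = ∫_ℝ g'(t)² dt`. -/
def Jact (g : ℝ → ℝ) : ℝ≥0∞ :=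
  ∫⁻ t : ℝ, ENNReal.ofReal (deriv g t ^ 2)


lemma hasDerivAt_min_const {c t : ℝ} (h : t ≠ c) :
    HasDerivAt (fun s => min s c) (if t < c then 1 else 0) t := by
  rcases lt_or_gt_of_ne h with h | h
  · rw [if_pos h]
    have he : (fun s : ℝ => min s c) =ᶠ[nhds t] id := by
      filter_upwards [Iio_mem_nhds h] with s hs
      exact min_eq_left hs.le
    exact (hasDerivAt_id t).congr_of_eventuallyEq he
  · rw [if_neg (not_lt.2 h.le)]
    have he : (fun s : ℝ => min s c) =ᶠ[nhds t] (fun _ => c) := by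
      filter_upwards [Ioi_mem_nhds h] with s hs
      exact min_eq_right hs.le
    exact (hasDerivAt_const t c).congr_of_eventuallyEq he

lemma hasDerivAt_fS (m : ℕ) (u v : Fin (m + 1) → ℝ) {t : ℝ} (ht : t ∉ Set.range u) :
    HasDerivAt (fS m u v)
      (∑ i : Fin m, (v i.succ - v i.castSucc) / (u i.succ - u i.castSucc) *
        ((if t < u i.succ then 1 else 0) - (if t < u i.castSucc then 1 else 0))) t := by
  have h : ∀ i : Fin (m+1), t ≠ u i := fun i hti => ht ⟨i, hti.symm⟩
  exact HasDerivAt.const_add _ (HasDerivAt.fun_sum fun i _ =>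
    (((hasDerivAt_min_const (h i.succ)).sub (hasDerivAt_min_const (h i.castSucc))).const_mul _))

lemma pointwise_ind (m : ℕ) (u v : Fin (m + 1) → ℝ) (hu : StrictMono u) {t : ℝ}
    (ht : t ∉ Set.range u) :
    ENNReal.ofReal ((∑ i : Fin m, (v i.succ - v i.castSucc) / (u i.succ - u i.castSucc) *
        ((if t < u i.succ then 1 else 0) - (if t < u i.castSucc then 1 else 0))) ^ 2)
      = ∑ i : Fin m, (Set.Ioo (u i.castSucc) (u i.succ)).indicator
          (fun _ => ENNReal.ofReal (((v i.succ - v i.castSucc) / (u i.succ - u i.castSucc)) ^ 2)) t := by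
  have hne : ∀ i : Fin (m+1), t ≠ u i := fun i hti => ht ⟨i, hti.symm⟩
  have hzero : ∀ i : Fin m, ¬ (u i.castSucc < t ∧ t < u i.succ) →
      ((if t < u i.succ then (1:ℝ) else 0) - (if t < u i.castSucc then 1 else 0)) = 0 := by
    intro i hi
    by_cases h1 : t < u i.castSucc
    · rw [if_pos h1, if_pos (h1.trans (hu (show i.castSucc < i.succ from Fin.castSucc_lt_succ)))]; ring
    · have h1' : u i.castSucc < t := lt_of_le_of_ne (not_lt.1 h1) (hne i.castSucc).symm
      have h2 : ¬ t < u i.succ := fun h2 => hi ⟨h1', h2⟩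
      rw [if_neg h1, if_neg h2]; ring
  by_cases hex : ∃ k : Fin m, u k.castSucc < t ∧ t < u k.succ
  · obtain ⟨k, hk⟩ := hex
    have huniq : ∀ i : Fin m, i ≠ k → ¬ (u i.castSucc < t ∧ t < u i.succ) := by
      intro i hik ⟨hi1, hi2⟩
      rcases lt_or_gt_of_ne hik with h | h
      · have h' : (i.succ : Fin (m+1)) ≤ k.castSucc := Fin.succ_le_castSucc_iff.2 h
        exact absurd (hi2.trans_le ((hu.le_iff_le).2 h')) (not_lt.2 hk.1.le)
      · have h' : (k.succ : Fin (m+1)) ≤ i.castSucc := Fin.succ_le_castSucc_iff.2 h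
        exact absurd (hk.2.trans_le ((hu.le_iff_le).2 h')) (not_lt.2 hi1.le)
    rw [Finset.sum_eq_single k, Finset.sum_eq_single k]
    · rw [Set.indicator_of_mem (Set.mem_Ioo.2 hk), if_pos hk.2, if_neg (not_lt.2 hk.1.le)]
      norm_num
    · intro i _ hik
      exact Set.indicator_of_notMem (fun hmem => huniq i hik (Set.mem_Ioo.1 hmem)) _
    · intro h; exact absurd (Finset.mem_univ k) h
    · intro i _ hik
      rw [hzero i (huniq i hik)]; ring
    · intro h; exact absurd (Finset.mem_univ k) h
  · push_neg at hex
    have : ∀ i : Fin m, i ∈ Finset.univ → (v i.succ - v i.castSucc) / (u i.succ - u i.castSucc) *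
        ((if t < u i.succ then (1:ℝ) else 0) - (if t < u i.castSucc then 1 else 0)) = 0 := by
      intro i _
      rw [hzero i (fun hi => absurd (hex i hi.1) (not_le.2 hi.2))]; ring
    rw [Finset.sum_congr rfl this]
    have : ∀ i : Fin m, i ∈ Finset.univ → (Set.Ioo (u i.castSucc) (u i.succ)).indicator
          (fun _ => ENNReal.ofReal (((v i.succ - v i.castSucc) / (u i.succ - u i.castSucc)) ^ 2)) t = 0 := by
      intro i _
      exact Set.indicator_of_notMem (fun hi => absurd (hex i hi.1) (not_le.2 hi.2)) _
    rw [Finset.sum_congr rfl this]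
    simp

lemma Jact_fS (m : ℕ) (u v : Fin (m + 1) → ℝ) (hu : StrictMono u) :
    Jact (fS m u v) = ∑ i : Fin m,
      ENNReal.ofReal ((v i.succ - v i.castSucc) ^ 2 / (u i.succ - u i.castSucc)) := by
  have hnull : ∀ᵐ t : ℝ, t ∉ Set.range u := by
    rw [MeasureTheory.ae_iff]
    simp only [not_not]
    exact ((Set.finite_range u).countable).measure_zero _
  have hcongr : ∀ᵐ t : ℝ, ENNReal.ofReal (deriv (fS m u v) t ^ 2)
      = ∑ i : Fin m, (Set.Ioo (u i.castSucc) (u i.succ)).indicator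
          (fun _ => ENNReal.ofReal (((v i.succ - v i.castSucc) / (u i.succ - u i.castSucc)) ^ 2)) t := by
    filter_upwards [hnull] with t ht
    rw [(hasDerivAt_fS m u v ht).deriv]
    exact pointwise_ind m u v hu ht
  rw [Jact, lintegral_congr_ae hcongr, lintegral_finset_sum]
  · refine Finset.sum_congr rfl fun i _ => ?_
    rw [lintegral_indicator measurableSet_Ioo, setLIntegral_const, Real.volume_Ioo,
      ← ENNReal.ofReal_mul (by positivity)]
    congr 1
    have hd : u i.castSucc < u i.succ := hu (show i.castSucc < i.succ from Fin.castSucc_lt_succ)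
    have hne : u i.succ - u i.castSucc ≠ 0 := sub_ne_zero.2 hd.ne'
    field_simp
  · intro i _
    exact (measurable_const.indicator measurableSet_Ioo)

lemma sum_fin_cut (m : ℕ) (g : Fin m → ℝ) (f : Fin (m+1) → ℝ) (k : Fin m)
    (hlt : ∀ i : Fin m, i < k → g i = f i.succ - f i.castSucc)
    (hgt : ∀ i : Fin m, k < i → g i = 0) :
    ∑ i : Fin m, g i = f k.castSucc - f 0 + g k := by
  classical
  set G : ℕ → ℝ := fun n => if h : n < m then g ⟨n, h⟩ else 0 with hG
  set F : ℕ → ℝ := fun n => f ⟨min n m, by omega⟩ with hF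
  have hFv : ∀ n (h : n ≤ m), F n = f ⟨n, by omega⟩ := by
    intro n h
    simp only [hF]
    congr 1
    exact Fin.ext (by simp [Nat.min_eq_left h])
  have h1 : ∑ i : Fin m, g i = ∑ i ∈ Finset.range m, G i := by
    rw [← Fin.sum_univ_eq_sum_range G m]
    refine Finset.sum_congr rfl fun i _ => ?_
    simp [hG, i.isLt]
  have hkm := k.isLt
  have h2 : ∑ i ∈ Finset.range m, G i
      = ∑ i ∈ Finset.range (k.val+1), G i + ∑ i ∈ Finset.Ico (k.val+1) m, G i := by
    rw [Finset.range_eq_Ico, ← Finset.sum_Ico_consecutive _ (by omega : 0 ≤ k.val+1) (by omega : k.val+1 ≤ m), Finset.range_eq_Ico]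
  have h3 : ∑ i ∈ Finset.Ico (k.val+1) m, G i = 0 := by
    refine Finset.sum_eq_zero fun i hi => ?_
    rw [Finset.mem_Ico] at hi
    have : G i = g ⟨i, hi.2⟩ := by simp [hG, hi.2]
    rw [this, hgt _ (by exact Fin.lt_def.2 (by simp; omega))]
  have h4 : ∑ i ∈ Finset.range (k.val+1), G i = ∑ i ∈ Finset.range k.val, G i + G k.val :=
    Finset.sum_range_succ G k.val
  have h5 : ∑ i ∈ Finset.range k.val, G i = F k.val - F 0 := by
    rw [← Finset.sum_range_sub F k.val]
    refine Finset.sum_congr rfl fun i hi => ?_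
    rw [Finset.mem_range] at hi
    have him : i < m := by omega
    have : G i = g ⟨i, him⟩ := by simp [hG, him]
    rw [this, hlt _ (Fin.lt_def.2 (by simpa using hi)), hFv (i+1) (by omega), hFv i (by omega)]
    congr 2 <;> exact Fin.ext (by simp)
  have hGk : G k.val = g k := by simp [hG, hkm]
  rw [h1, h2, h3, h4, h5, hGk, hFv k.val (by omega), hFv 0 (by omega)]
  have hkc : f k.castSucc = f ⟨k.val, by omega⟩ := congrArg f (Fin.ext rfl)
  have h0 : f 0 = f ⟨0, by omega⟩ := congrArg f (Fin.ext rfl)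
  rw [hkc, h0]
  ring

lemma fin_telescope (m : ℕ) (f : Fin (m+1) → ℝ) :
    ∑ i : Fin m, (f i.succ - f i.castSucc) = f (Fin.last m) - f 0 := by
  set F : ℕ → ℝ := fun n => f ⟨min n m, by omega⟩ with hF
  have hFv : ∀ n (h : n ≤ m), F n = f ⟨n, by omega⟩ := by
    intro n h
    simp only [hF]
    congr 1
    exact Fin.ext (by simp [Nat.min_eq_left h])
  have h1 : ∑ i : Fin m, (f i.succ - f i.castSucc)
      = ∑ i ∈ Finset.range m, (F (i+1) - F i) := by
    rw [← Fin.sum_univ_eq_sum_range (fun n => F (n+1) - F n) m]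
    refine Finset.sum_congr rfl fun i _ => ?_
    have := i.isLt
    rw [hFv (i.val+1) (by omega), hFv i.val (by omega)]
    congr 2 <;> exact Fin.ext (by simp)
  rw [h1, Finset.sum_range_sub F, hFv m (le_refl m), hFv 0 (by omega)]
  congr 2 <;> exact Fin.ext rfl

lemma fS_left (m : ℕ) (u v : Fin (m + 1) → ℝ) (hu : StrictMono u) {x : ℝ}
    (hx : x ≤ u 0) : fS m u v x = v 0 := by
  unfold fS
  have : ∀ i : Fin m, i ∈ Finset.univ → (v i.succ - v i.castSucc) / (u i.succ - u i.castSucc) *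
      (min x (u i.succ) - min x (u i.castSucc)) = 0 := by
    intro i _
    rw [min_eq_left (hx.trans (hu.monotone (Fin.zero_le _))),
      min_eq_left (hx.trans (hu.monotone (Fin.zero_le _)))]
    ring
  rw [Finset.sum_congr rfl this]
  simp

lemma fS_right (m : ℕ) (u v : Fin (m + 1) → ℝ) (hu : StrictMono u) {x : ℝ}
    (hx : u (Fin.last m) ≤ x) : fS m u v x = v (Fin.last m) := by
  unfold fS
  have : ∀ i : Fin m, i ∈ Finset.univ → (v i.succ - v i.castSucc) / (u i.succ - u i.castSucc) *
      (min x (u i.succ) - min x (u i.castSucc)) = v i.succ - v i.castSucc := by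
    intro i _
    rw [min_eq_right ((hu.monotone (Fin.le_last _)).trans hx),
      min_eq_right ((hu.monotone (Fin.le_last _)).trans hx)]
    have hne : u i.succ - u i.castSucc ≠ 0 := sub_ne_zero.2 (hu (show i.castSucc < i.succ from Fin.castSucc_lt_succ)).ne'
    field_simp
  rw [Finset.sum_congr rfl this, fin_telescope m v]
  ring

lemma fS_mid (m : ℕ) (u v : Fin (m + 1) → ℝ) (hu : StrictMono u) (k : Fin m) {x : ℝ}
    (h1 : u k.castSucc ≤ x) (h2 : x ≤ u k.succ) :
    fS m u v x = v k.castSucc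
      + (v k.succ - v k.castSucc) / (u k.succ - u k.castSucc) * (x - u k.castSucc) := by
  unfold fS
  rw [sum_fin_cut m _ v k]
  · rw [min_eq_left h2, min_eq_right h1]
    ring
  · intro i hik
    have hsc : (i.succ : Fin (m+1)) ≤ k.castSucc := Fin.succ_le_castSucc_iff.2 hik
    have hu1 : u i.succ ≤ x := (hu.monotone hsc).trans h1
    have hu2 : u i.castSucc ≤ x := ((hu (show i.castSucc < i.succ from Fin.castSucc_lt_succ)).le.trans hu1)
    rw [min_eq_right hu1, min_eq_right hu2]
    have hne : u i.succ - u i.castSucc ≠ 0 := sub_ne_zero.2 (hu (show i.castSucc < i.succ from Fin.castSucc_lt_succ)).ne'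
    field_simp
  · intro i hik
    have hsc : (k.succ : Fin (m+1)) ≤ i.castSucc := Fin.succ_le_castSucc_iff.2 hik
    have hu1 : x ≤ u i.castSucc := h2.trans (hu.monotone hsc)
    have hu2 : x ≤ u i.succ := hu1.trans (hu (show i.castSucc < i.succ from Fin.castSucc_lt_succ)).le
    rw [min_eq_left hu1, min_eq_left hu2]
    ring

/-- Inserting a new point `(x, y)` with `x ∉ {u_0, …, u_m}` into the interpolation
set increases the action by at least `(y - f_S(x))² / min_i |x - u_i|`. -/
theorem stmt17 (m : ℕ) (u v : Fin (m + 1) → ℝ) (hu : StrictMono u)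
    (x y : ℝ) (hx : x ∉ Set.range u)
    (u' v' : Fin (m + 2) → ℝ) (hu' : StrictMono u')
    (hrange : Set.range u' = insert x (Set.range u))
    (hvx : ∀ i, u' i = x → v' i = y)
    (hvu : ∀ i k, u' i = u k → v' i = v k) :
    Jact (fS m u v) + ENNReal.ofReal ((y - fS m u v x) ^ 2 / ⨅ i, |x - u i|)
      ≤ Jact (fS (m + 1) u' v') := by
  classical
  -- the index of x in u'
  obtain ⟨j, hj⟩ : ∃ j, u' j = x := by
    have : x ∈ Set.range u' := by rw [hrange]; exact Set.mem_insert _ _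
    exact this
  -- u' ∘ succAbove j = u
  have hcomp : u' ∘ j.succAbove = u := by
    have hmono : StrictMono (u' ∘ j.succAbove) := hu'.comp (Fin.strictMono_succAbove j)
    have inst : WellFoundedLT (Fin (m+1)) := inferInstance
    refine (@StrictMono.range_inj (Fin (m+1)) ℝ _ _ inst _ _ hmono hu).1 ?_
    rw [Set.range_comp, Fin.range_succAbove]
    ext z
    constructor
    · rintro ⟨i, hi, rfl⟩
      have hz : u' i ∈ insert x (Set.range u) := by rw [← hrange]; exact ⟨i, rfl⟩
      rcases hz with hz | hz
      · exact absurd (hu'.injective (hz.trans hj.symm)) hi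
      · exact hz
    · rintro ⟨k, rfl⟩
      have hmem : u k ∈ Set.range u' := by rw [hrange]; exact Set.mem_insert_of_mem _ ⟨k, rfl⟩
      obtain ⟨i, hi⟩ := hmem
      refine ⟨i, fun hij => hx ⟨k, ?_⟩, hi⟩
      rw [← hi, hij, hj]
  have heq : ∀ i : Fin (m+1), u' (j.succAbove i) = u i := fun i => congrFun hcomp i
  have hval : ∀ i : Fin (m+1), v' (j.succAbove i) = v i := fun i => hvu _ i (heq i)
  have hvj : v' j = y := hvx j hj
  have hlow : ∀ i : Fin (m+1), i.castSucc < j → u' i.castSucc = u i ∧ v' i.castSucc = v i := by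
    intro i hij
    have hs : j.succAbove i = i.castSucc := Fin.succAbove_of_castSucc_lt j i hij
    rw [← hs]; exact ⟨heq i, hval i⟩
  have hhigh : ∀ i : Fin (m+1), j ≤ i.castSucc → u' i.succ = u i ∧ v' i.succ = v i := by
    intro i hij
    have hs : j.succAbove i = i.succ := Fin.succAbove_of_le_castSucc j i hij
    rw [← hs]; exact ⟨heq i, hval i⟩
  set jn := (j : ℕ) with hjn_def
  have hjnm : jn ≤ m + 1 := by omega
  -- clamped versions
  set U : ℕ → ℝ := fun n => u ⟨min n m, Nat.lt_succ_of_le (min_le_right n m)⟩ with hU_def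
  set V : ℕ → ℝ := fun n => v ⟨min n m, Nat.lt_succ_of_le (min_le_right n m)⟩ with hV_def
  set U' : ℕ → ℝ := fun n => u' ⟨min n (m+1), Nat.lt_succ_of_le (min_le_right n (m+1))⟩ with hU'_def
  set V' : ℕ → ℝ := fun n => v' ⟨min n (m+1), Nat.lt_succ_of_le (min_le_right n (m+1))⟩ with hV'_def
  have hU : ∀ n (h : n ≤ m), U n = u ⟨n, Nat.lt_succ_of_le h⟩ :=
    fun n h => congrArg u (Fin.ext (min_eq_left h))
  have hV : ∀ n (h : n ≤ m), V n = v ⟨n, Nat.lt_succ_of_le h⟩ :=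
    fun n h => congrArg v (Fin.ext (min_eq_left h))
  have hU' : ∀ n (h : n ≤ m+1), U' n = u' ⟨n, Nat.lt_succ_of_le h⟩ :=
    fun n h => congrArg u' (Fin.ext (min_eq_left h))
  have hV' : ∀ n (h : n ≤ m+1), V' n = v' ⟨n, Nat.lt_succ_of_le h⟩ :=
    fun n h => congrArg v' (Fin.ext (min_eq_left h))
  have hUlt : ∀ k, k < jn → U' k = U k ∧ V' k = V k := by
    intro k hk
    have hkm : k ≤ m := by omega
    have hcs : ((⟨k, Nat.lt_succ_of_le hkm⟩ : Fin (m+1)).castSucc) < j := by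
      rw [Fin.lt_def]; simpa using hk
    have hi := hlow ⟨k, Nat.lt_succ_of_le hkm⟩ hcs
    constructor
    · rw [hU' k (by omega), hU k hkm, ← hi.1]
      all_goals exact congrArg u' (Fin.ext rfl)
    · rw [hV' k (by omega), hV k hkm, ← hi.2]
      all_goals exact congrArg v' (Fin.ext rfl)
  have hUgt : ∀ k, jn < k → k ≤ m+1 → U' k = U (k-1) ∧ V' k = V (k-1) := by
    intro k h1 h2
    have hkm : k - 1 ≤ m := by omega
    have hcs : j ≤ ((⟨k-1, Nat.lt_succ_of_le hkm⟩ : Fin (m+1)).castSucc) := by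
      rw [Fin.le_def]; simp; omega
    have hi := hhigh ⟨k-1, Nat.lt_succ_of_le hkm⟩ hcs
    constructor
    · rw [hU' k h2, hU (k-1) hkm, ← hi.1]
      all_goals exact congrArg u' (Fin.ext (by simp; omega))
    · rw [hV' k h2, hV (k-1) hkm, ← hi.2]
      all_goals exact congrArg v' (Fin.ext (by simp; omega))
  have hUgt' : ∀ k, jn ≤ k → k ≤ m → U' (k+1) = U k ∧ V' (k+1) = V k := by
    intro k h1 h2
    have h := hUgt (k+1) (by omega) (by omega)
    simpa using h
  have hUx : U' jn = x := by
    rw [hU' jn hjnm, ← hj]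
    all_goals exact congrArg u' (Fin.ext rfl)
  have hVx : V' jn = y := by
    rw [hV' jn hjnm, ← hvj]
    all_goals exact congrArg v' (Fin.ext rfl)
  have ord' : ∀ k l, k < l → l ≤ m+1 → U' k < U' l := by
    intro k l hkl hl
    rw [hU' k (by omega), hU' l hl]
    exact hu' (Fin.mk_lt_mk.2 hkl)
  -- division monotonicity helper
  have hdivmono : ∀ (A c1 c2 : ℝ), 0 ≤ A → 0 < c1 → c1 ≤ c2 → A / c2 ≤ A / c1 := by
    intro A c1 c2 hA h1 h12
    rw [div_le_div_iff₀ (lt_of_lt_of_le h1 h12) h1]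
    exact mul_le_mul_of_nonneg_left h12 hA
  -- the sums
  set E : ℕ → ℝ≥0∞ := fun i => ENNReal.ofReal ((V (i+1) - V i)^2 / (U (i+1) - U i)) with hE_def
  set E' : ℕ → ℝ≥0∞ := fun i => ENNReal.ofReal ((V' (i+1) - V' i)^2 / (U' (i+1) - U' i)) with hE'_def
  have hJ : Jact (fS m u v) = ∑ i ∈ Finset.range m, E i := by
    rw [Jact_fS m u v hu, ← Fin.sum_univ_eq_sum_range E m]
    refine Finset.sum_congr rfl fun i _ => ?_
    have := i.isLt
    have e1 : v i.succ = V (i.val+1) := by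
      rw [hV (i.val+1) (by omega)]
      all_goals exact congrArg v (Fin.ext rfl)
    have e2 : v i.castSucc = V i.val := by
      rw [hV i.val (by omega)]
      all_goals exact congrArg v (Fin.ext rfl)
    have e3 : u i.succ = U (i.val+1) := by
      rw [hU (i.val+1) (by omega)]
      all_goals exact congrArg u (Fin.ext rfl)
    have e4 : u i.castSucc = U i.val := by
      rw [hU i.val (by omega)]
      all_goals exact congrArg u (Fin.ext rfl)
    rw [e1, e2, e3, e4, hE_def]
  have hJ' : Jact (fS (m+1) u' v') = ∑ i ∈ Finset.range (m+1), E' i := by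
    rw [Jact_fS (m+1) u' v' hu', ← Fin.sum_univ_eq_sum_range E' (m+1)]
    refine Finset.sum_congr rfl fun i _ => ?_
    have := i.isLt
    have e1 : v' i.succ = V' (i.val+1) := by
      rw [hV' (i.val+1) (by omega)]
      all_goals exact congrArg v' (Fin.ext rfl)
    have e2 : v' i.castSucc = V' i.val := by
      rw [hV' i.val (by omega)]
      all_goals exact congrArg v' (Fin.ext rfl)
    have e3 : u' i.succ = U' (i.val+1) := by
      rw [hU' (i.val+1) (by omega)]
      all_goals exact congrArg u' (Fin.ext rfl)
    have e4 : u' i.castSucc = U' i.val := by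
      rw [hU' i.val (by omega)]
      all_goals exact congrArg u' (Fin.ext rfl)
    rw [e1, e2, e3, e4, hE'_def]
  have hu00 : U 0 = u 0 := congrArg u (Fin.ext (by simp))
  have humm : U m = u (Fin.last m) := congrArg u (Fin.ext (by simp))
  have hv00 : V 0 = v 0 := congrArg v (Fin.ext (by simp))
  have hvmm : V m = v (Fin.last m) := congrArg v (Fin.ext (by simp))
  rw [hJ, hJ']
  by_cases hjn0 : jn = 0
  · -- x below all nodes
    have hU'0 : U' 0 = x := by rw [← hjn0]; exact hUx
    have hV'0 : V' 0 = y := by rw [← hjn0]; exact hVx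
    have hU'1 : U' 1 = U 0 := by
      have := (hUgt' 0 (by omega) (by omega)).1
      simpa using this
    have hV'1 : V' 1 = V 0 := by
      have := (hUgt' 0 (by omega) (by omega)).2
      simpa using this
    have hxlt : x < U 0 := by
      have h01 : U' 0 < U' 1 := ord' 0 1 one_pos (by omega)
      rwa [hU'0, hU'1] at h01
    have hfsx : fS m u v x = V 0 := by
      rw [fS_left m u v hu (by rw [← hu00]; exact hxlt.le)]
      exact hv00.symm
    have hinf : U 0 - x ≤ ⨅ i, |x - u i| := by
      refine le_ciInf fun i => ?_
      have h0i : U 0 ≤ u i := by rw [hu00]; exact hu.monotone (Fin.zero_le i)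
      rw [abs_sub_comm, abs_of_nonneg (by linarith)]
      linarith
    have hQle : ENNReal.ofReal ((y - fS m u v x) ^ 2 / ⨅ i, |x - u i|) ≤ E' 0 := by
      have hE'0 : E' 0 = ENNReal.ofReal ((y - V 0)^2 / (U 0 - x)) := by
        simp only [hE'_def]
        rw [hU'0, hU'1, hV'0, hV'1]
        congr 1
        ring
      rw [hfsx, hE'0]
      exact ENNReal.ofReal_le_ofReal (hdivmono _ _ _ (sq_nonneg _) (by linarith) hinf)
    rw [Finset.sum_range_succ' E' m]
    have hsh : ∀ i ∈ Finset.range m, E' (i+1) = E i := by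
      intro i hi
      rw [Finset.mem_range] at hi
      have g1 := hUgt' i (by omega) (by omega)
      have g2 := hUgt' (i+1) (by omega) (by omega)
      simp only [hE'_def, hE_def]
      rw [g1.1, g1.2, g2.1, g2.2]
    rw [Finset.sum_congr rfl hsh]
    exact add_le_add_right hQle _
  · by_cases hjntop : jn = m + 1
    · -- x above all nodes
      have hU'm1 : U' (m+1) = x := by rw [← hjntop]; exact hUx
      have hV'm1 : V' (m+1) = y := by rw [← hjntop]; exact hVx
      have hU'm : U' m = U m := (hUlt m (by omega)).1
      have hV'm : V' m = V m := (hUlt m (by omega)).2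
      have hxgt : U m < x := by
        have h01 : U' m < U' (m+1) := ord' m (m+1) (by omega) (by omega)
        rwa [hU'm, hU'm1] at h01
      have hfsx : fS m u v x = V m := by
        rw [fS_right m u v hu (by rw [← humm]; exact hxgt.le)]
        exact hvmm.symm
      have hinf : x - U m ≤ ⨅ i, |x - u i| := by
        refine le_ciInf fun i => ?_
        have h0i : u i ≤ U m := by rw [humm]; exact hu.monotone (Fin.le_last i)
        rw [abs_of_nonneg (by linarith)]
        linarith
      have hQle : ENNReal.ofReal ((y - fS m u v x) ^ 2 / ⨅ i, |x - u i|) ≤ E' m := by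
        have hE'm : E' m = ENNReal.ofReal ((y - V m)^2 / (x - U m)) := by
          simp only [hE'_def]
          rw [hU'm, hU'm1, hV'm, hV'm1]
        rw [hfsx, hE'm]
        exact ENNReal.ofReal_le_ofReal (hdivmono _ _ _ (sq_nonneg _) (by linarith) hinf)
      rw [Finset.sum_range_succ E' m]
      have hsh : ∀ i ∈ Finset.range m, E' i = E i := by
        intro i hi
        rw [Finset.mem_range] at hi
        have g1 := hUlt i (by omega)
        have g2 := hUlt (i+1) (by omega)
        simp only [hE'_def, hE_def]
        rw [g1.1, g1.2, g2.1, g2.2]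
      rw [Finset.sum_congr rfl hsh]
      exact add_le_add_right hQle _
    · -- interior case
      obtain ⟨c, hc⟩ : ∃ c, jn = c + 1 := ⟨jn - 1, by omega⟩
      have hcm : c < m := by omega
      have hUc : U' c = U c := (hUlt c (by omega)).1
      have hVc : V' c = V c := (hUlt c (by omega)).2
      have hU'c1 : U' (c+1) = x := by rw [← hc]; exact hUx
      have hV'c1 : V' (c+1) = y := by rw [← hc]; exact hVx
      have hU'c2 : U' (c+2) = U (c+1) := (hUgt' (c+1) (by omega) (by omega)).1
      have hV'c2 : V' (c+2) = V (c+1) := (hUgt' (c+1) (by omega) (by omega)).2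
      have ha : 0 < x - U c := by
        have h := ord' c (c+1) (by omega) (by omega)
        rw [hUc, hU'c1] at h
        linarith
      have hb : 0 < U (c+1) - x := by
        have h := ord' (c+1) (c+2) (by omega) (by omega)
        rw [hU'c1, hU'c2] at h
        linarith
      have ecs : u ((⟨c, hcm⟩ : Fin m)).castSucc = U c := by
        rw [hU c (by omega)]
        all_goals exact congrArg u (Fin.ext rfl)
      have esu : u ((⟨c, hcm⟩ : Fin m)).succ = U (c+1) := by
        rw [hU (c+1) (by omega)]
        all_goals exact congrArg u (Fin.ext rfl)
      have evc : v ((⟨c, hcm⟩ : Fin m)).castSucc = V c := by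
        rw [hV c (by omega)]
        all_goals exact congrArg v (Fin.ext rfl)
      have evs : v ((⟨c, hcm⟩ : Fin m)).succ = V (c+1) := by
        rw [hV (c+1) (by omega)]
        all_goals exact congrArg v (Fin.ext rfl)
      have hfsx : fS m u v x = V c + (V (c+1) - V c) / (U (c+1) - U c) * (x - U c) := by
        rw [fS_mid m u v hu ⟨c, hcm⟩ (by rw [ecs]; linarith) (by rw [esu]; linarith),
          ecs, esu, evc, evs]
      have hane : x - U c ≠ 0 := ne_of_gt ha
      have hbne : U (c+1) - x ≠ 0 := ne_of_gt hb
      have habne : U (c+1) - U c ≠ 0 := by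
        have : 0 < U (c+1) - U c := by linarith
        exact ne_of_gt this
      set d : ℝ := y - fS m u v x with hd_def
      have hkey : (y - V c)^2/(x - U c) + (V (c+1) - y)^2/(U (c+1) - x)
          = (V (c+1) - V c)^2/(U (c+1) - U c)
            + d^2 * (1/(x - U c) + 1/(U (c+1) - x)) := by
        rw [hd_def, hfsx]
        field_simp
        ring
      have hinf : min (x - U c) (U (c+1) - x) ≤ ⨅ i, |x - u i| := by
        refine le_ciInf fun i => ?_
        by_cases hic : (i : ℕ) ≤ c
        · have hui : u i ≤ U c := by
            rw [hU c (by omega)]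
            exact hu.monotone (by rw [Fin.le_def]; simpa using hic)
          rw [abs_of_nonneg (by linarith)]
          exact (min_le_left _ _).trans (by linarith)
        · have hui : U (c+1) ≤ u i := by
            rw [hU (c+1) (by omega)]
            exact hu.monotone (by rw [Fin.le_def]; simp; omega)
          rw [abs_sub_comm, abs_of_nonneg (by linarith)]
          exact (min_le_right _ _).trans (by linarith)
      have hQle : ENNReal.ofReal (d^2 / ⨅ i, |x - u i|)
          ≤ ENNReal.ofReal (d^2 * (1/(x - U c) + 1/(U (c+1) - x))) := by
        apply ENNReal.ofReal_le_ofReal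
        have step1 : d^2 / (⨅ i, |x - u i|) ≤ d^2 / min (x - U c) (U (c+1) - x) :=
          hdivmono _ _ _ (sq_nonneg _) (lt_min ha hb) hinf
        refine step1.trans ?_
        rcases min_cases (x - U c) (U (c+1) - x) with ⟨hmin, _⟩ | ⟨hmin, _⟩ <;>
          rw [hmin, div_eq_mul_one_div]
        · exact mul_le_mul_of_nonneg_left (le_add_of_nonneg_right (by positivity)) (sq_nonneg d)
        · exact mul_le_mul_of_nonneg_left (le_add_of_nonneg_left (by positivity)) (sq_nonneg d)
      have eEc : E c = ENNReal.ofReal ((V (c+1) - V c)^2/(U (c+1) - U c)) := by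
        simp only [hE_def]
      have eE'c : E' c = ENNReal.ofReal ((y - V c)^2/(x - U c)) := by
        simp only [hE'_def]
        rw [hU'c1, hV'c1, hUc, hVc]
      have eE'c1 : E' (c+1) = ENNReal.ofReal ((V (c+1) - y)^2/(U (c+1) - x)) := by
        simp only [hE'_def]
        rw [hU'c1, hV'c1, hU'c2, hV'c2]
      have hloc : E c + ENNReal.ofReal (d^2 / ⨅ i, |x - u i|) ≤ E' c + E' (c+1) := by
        rw [eEc, eE'c, eE'c1]
        calc ENNReal.ofReal ((V (c+1) - V c)^2/(U (c+1) - U c))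
              + ENNReal.ofReal (d^2 / ⨅ i, |x - u i|)
            ≤ ENNReal.ofReal ((V (c+1) - V c)^2/(U (c+1) - U c))
              + ENNReal.ofReal (d^2 * (1/(x - U c) + 1/(U (c+1) - x))) := add_le_add_right hQle _
          _ = ENNReal.ofReal ((V (c+1) - V c)^2/(U (c+1) - U c)
              + d^2 * (1/(x - U c) + 1/(U (c+1) - x))) := by
              rw [ENNReal.ofReal_add (div_nonneg (sq_nonneg _) (by linarith)) (by positivity)]
          _ = ENNReal.ofReal ((y - V c)^2/(x - U c) + (V (c+1) - y)^2/(U (c+1) - x)) := by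
              rw [← hkey]
          _ = ENNReal.ofReal ((y - V c)^2/(x - U c))
              + ENNReal.ofReal ((V (c+1) - y)^2/(U (c+1) - x)) := by
              rw [ENNReal.ofReal_add (div_nonneg (sq_nonneg _) ha.le) (div_nonneg (sq_nonneg _) hb.le)]
      have hsplit : ∑ i ∈ Finset.range m, E i
          = ∑ i ∈ Finset.range c, E i + E c + ∑ i ∈ Finset.Ico (c+1) m, E i := by
        rw [Finset.range_eq_Ico,
          ← Finset.sum_Ico_consecutive E (Nat.zero_le (c+1)) (by omega : c+1 ≤ m),
          ← Finset.range_eq_Ico, Finset.sum_range_succ E c]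
      have hsplit' : ∑ i ∈ Finset.range (m+1), E' i
          = ∑ i ∈ Finset.range c, E' i + E' c + E' (c+1) + ∑ i ∈ Finset.Ico (c+2) (m+1), E' i := by
        rw [Finset.range_eq_Ico,
          ← Finset.sum_Ico_consecutive E' (Nat.zero_le (c+2)) (by omega : c+2 ≤ m+1),
          ← Finset.range_eq_Ico, Finset.sum_range_succ E' (c+1), Finset.sum_range_succ E' c]
      have hlowsum : ∑ i ∈ Finset.range c, E' i = ∑ i ∈ Finset.range c, E i := by
        refine Finset.sum_congr rfl fun i hi => ?_
        rw [Finset.mem_range] at hi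
        have g1 := hUlt i (by omega)
        have g2 := hUlt (i+1) (by omega)
        simp only [hE'_def, hE_def]
        rw [g1.1, g1.2, g2.1, g2.2]
      have hshift : ∑ i ∈ Finset.Ico (c+2) (m+1), E' i = ∑ i ∈ Finset.Ico (c+1) m, E i := by
        rw [Finset.sum_Ico_eq_sum_range, Finset.sum_Ico_eq_sum_range]
        have hlen : m + 1 - (c+2) = m - (c+1) := by omega
        rw [hlen]
        refine Finset.sum_congr rfl fun i hi => ?_
        rw [Finset.mem_range] at hi
        have g1 : U' (c+2+i) = U (c+1+i) ∧ V' (c+2+i) = V (c+1+i) := by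
          have h := hUgt' (c+1+i) (by omega) (by omega)
          constructor
          · rw [← h.1]; exact congrArg U' (by omega)
          · rw [← h.2]; exact congrArg V' (by omega)
        have g2 : U' (c+2+i+1) = U (c+1+i+1) ∧ V' (c+2+i+1) = V (c+1+i+1) := by
          have h := hUgt' (c+2+i) (by omega) (by omega)
          constructor
          · rw [h.1]; exact congrArg U (by omega)
          · rw [h.2]; exact congrArg V (by omega)
        simp only [hE'_def, hE_def]
        rw [g1.1, g1.2, g2.1, g2.2]
      calc ∑ i ∈ Finset.range m, E i + ENNReal.ofReal (d^2 / ⨅ i, |x - u i|)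
          = ∑ i ∈ Finset.range c, E i + ∑ i ∈ Finset.Ico (c+1) m, E i
            + (E c + ENNReal.ofReal (d^2 / ⨅ i, |x - u i|)) := by rw [hsplit]; ring
        _ ≤ ∑ i ∈ Finset.range c, E i + ∑ i ∈ Finset.Ico (c+1) m, E i + (E' c + E' (c+1)) :=
            add_le_add_right hloc _
        _ = ∑ i ∈ Finset.range (m+1), E' i := by rw [hsplit', hlowsum, hshift]; ring
end
end
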